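/- Let F be the free group on a countable set of generators {x_i}. Define sequences by the recursion s^{i+1}_τ = s^{i+1}_{τ-1} · s^i_τ (prefix product), with s^0_τ = x_τ. Then for every n and t ≥ n, the reduced word expressing s^0_t in terms of the letters {s^n_{t-n}, ..., s^n_t} (via the inversion s^i_τ = (s^{i+1}_{τ-1})^{-1} s^{i+1}_τ) uses only indices in the window [t-n, t], and has length 2^n as a product of the elements s^n_{t_i} and their inverses. -/

import Mathlib

/-- Left-to-right prefix products of a sequence in the free group (or any group):
`(prefixProd f) τ = f 0 * f 1 * ... * f τ`, so that
`(prefixProd f) τ = (prefixProd f) (τ-1) * f τ`. -/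
def prefixProd {G : Type*} [Group G] (f : ℕ → G) (τ : ℕ) : G :=
  ((List.range (τ + 1)).map f).prod

/-- The `n`-fold prefix-product aggregation of the generator sequence of the free group
on countably many generators: `s^0_τ = x_τ` and `s^{i+1} = prefixProd s^i`. -/
def sLevel (n : ℕ) : ℕ → FreeGroup ℕ :=
  prefixProd^[n] FreeGroup.of

/-!
Inverting one prefix-product step, `f τ = (P (τ - 1))⁻¹ * P τ` with `P = prefixProd f`,
replaces a letter `f τ^{±1}` by two letters of `P` with indices `τ - 1` and `τ`. Starting from
the one-letter word `x_t` and doing this `n` times doubles the length each time and lowers the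
smallest index by at most one each time, giving a word of length `2^n` in `s^n` with indices
in `[t - n, t]`.
-/

theorem List.exists_ofFn_eq {α : Type*} {m : ℕ} (L : List α) (h : L.length = m) :
    ∃ v : Fin m → α, List.ofFn v = L := by
  subst h
  exact ⟨L.get, List.ofFn_get L⟩

section SignedWords

variable {G : Type*} [Group G]

theorem prefixProd_succ (f : ℕ → G) (τ : ℕ) :
    prefixProd f (τ + 1) = prefixProd f τ * f (τ + 1) := by
  simp [prefixProd, List.range_succ, mul_assoc]

def signedLetter (s : ℕ → G) (p : ℕ × Bool) : G :=
  if p.2 then s p.1 else (s p.1)⁻¹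

/-- The two letters of `prefixProd f` that `signedLetter f p` equals, by
`f τ = (P (τ - 1))⁻¹ * P τ` and `(f τ)⁻¹ = (P τ)⁻¹ * P (τ - 1)`. -/
def expandLetter (p : ℕ × Bool) : List (ℕ × Bool) :=
  if p.2 then [(p.1 - 1, false), (p.1, true)] else [(p.1, false), (p.1 - 1, true)]

theorem prod_map_signedLetter_expandLetter (f : ℕ → G) {p : ℕ × Bool} (hp : 1 ≤ p.1) :
    ((expandLetter p).map (signedLetter (prefixProd f))).prod = signedLetter f p := by
  obtain ⟨⟨τ, b⟩, rfl⟩ : ∃ q : ℕ × Bool, p = (q.1 + 1, q.2) :=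
    ⟨(p.1 - 1, p.2), by ext <;> simp; omega⟩
  cases b <;> simp [expandLetter, signedLetter, prefixProd_succ]

theorem prod_map_signedLetter_flatMap_expandLetter (f : ℕ → G) {L : List (ℕ × Bool)}
    (hL : ∀ p ∈ L, 1 ≤ p.1) :
    ((L.flatMap expandLetter).map (signedLetter (prefixProd f))).prod =
      (L.map (signedLetter f)).prod := by
  simp only [List.flatMap, List.map_flatten, List.prod_flatten, List.map_map]
  congr 1
  exact List.map_congr_left fun p hp => prod_map_signedLetter_expandLetter f (hL p hp)

end SignedWords

theorem length_flatMap_expandLetter (L : List (ℕ × Bool)) :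
    (L.flatMap expandLetter).length = 2 * L.length := by
  induction L with
  | nil => rfl
  | cons p L ih => cases h : p.2 <;> simp [expandLetter, h, ih] <;> ring

theorem mem_flatMap_expandLetter {L : List (ℕ × Bool)} {a b : ℕ}
    (hL : ∀ p ∈ L, a + 1 ≤ p.1 ∧ p.1 ≤ b) :
    ∀ q ∈ L.flatMap expandLetter, a ≤ q.1 ∧ q.1 ≤ b := by
  intro q hq
  obtain ⟨⟨τ, c⟩, hp, hq⟩ := List.mem_flatMap.mp hq
  have := hL _ hp
  cases c <;> simp only [expandLetter, Bool.false_eq_true, if_true, if_false, List.mem_cons,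
    List.not_mem_nil, or_false] at hq <;>
    rcases hq with rfl | rfl <;> dsimp only at this ⊢ <;> omega

theorem exists_signedWord_iterate_prefixProd {G : Type*} [Group G] (f : ℕ → G) {n t : ℕ}
    (ht : n ≤ t) :
    ∃ L : List (ℕ × Bool), L.length = 2 ^ n ∧ (∀ p ∈ L, t - n ≤ p.1 ∧ p.1 ≤ t) ∧
      f t = (L.map (signedLetter (prefixProd^[n] f))).prod := by
  induction n with
  | zero => exact ⟨[(t, true)], rfl, by simp, by simp [signedLetter]⟩
  | succ n ih =>
    obtain ⟨L, hlen, hwin, hprod⟩ := ih (by omega)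
    have hwin' : ∀ p ∈ L, t - (n + 1) + 1 ≤ p.1 ∧ p.1 ≤ t :=
      fun p hp => ⟨by have := (hwin p hp).1; omega, (hwin p hp).2⟩
    refine ⟨L.flatMap expandLetter, ?_, mem_flatMap_expandLetter hwin', ?_⟩
    · rw [length_flatMap_expandLetter, hlen, pow_succ, mul_comm]
    · rw [Function.iterate_succ_apply', prod_map_signedLetter_flatMap_expandLetter _
        fun p hp => (Nat.le_add_left 1 _).trans (hwin' p hp).1]
      exact hprod

/-- For `t ≥ n`, the generator `s^0_t = x_t` is expressible as a product of exactly `2^n`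
factors, each of which is some `s^n_{t_i}` or its inverse with index `t_i` in the window
`[t - n, t]`. -/
theorem sLevel_window_expression (n t : ℕ) (ht : n ≤ t) :
    ∃ (idx : Fin (2 ^ n) → ℕ) (sign : Fin (2 ^ n) → Bool),
      (∀ i : Fin (2 ^ n), t - n ≤ idx i ∧ idx i ≤ t) ∧
      FreeGroup.of t =
        (List.ofFn (fun i : Fin (2 ^ n) =>
          if sign i then sLevel n (idx i) else (sLevel n (idx i))⁻¹)).prod := by
  obtain ⟨L, hlen, hwin, hprod⟩ := exists_signedWord_iterate_prefixProd FreeGroup.of ht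
  obtain ⟨v, rfl⟩ := L.exists_ofFn_eq hlen
  refine ⟨fun i => (v i).1, fun i => (v i).2,
    fun i => hwin _ (List.mem_ofFn.2 ⟨i, rfl⟩), ?_⟩
  rw [hprod, List.map_ofFn]
  rfl
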